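/- The Construction-1 packet-level code C_{(a,a(r+1)−1,r)} is a (1,r) streaming code: if the single packet c(t) is erased and all message packets m(t') with t' < t are known, then for each i ∈ {0,…,r−1} the symbol m_i(t) is uniquely determined by the parity symbol p_0(t+r−i) together with the unerased packets c(t+1),…,c(t+r); hence m(t) is recovered within delay r. -/

import Mathlib

/-- A packet-level code with a causal systematic encoder: the parity part of the
coded packet at time `t` is a fixed function of the message packets at times `≤ t`. -/
structure PacketCode (F : Type) (k n : ℕ) where
  parity : (ℤ → Fin k → F) → ℤ → Fin (n - k) → F
  causal : ∀ (m m' : ℤ → Fin k → F) (t : ℤ),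
    (∀ t' ≤ t, m t' = m' t') → parity m t = parity m' t

/-- A valid message stream vanishes at negative times. -/
def IsMsgStream {F : Type} [Zero F] {k : ℕ} (m : ℤ → Fin k → F) : Prop :=
  ∀ t < 0, m t = 0

/-- `(a, τ)` streaming-code property. -/
def IsSC {F : Type} [Zero F] {k n : ℕ} (C : PacketCode F k n) (a τ : ℕ) : Prop :=
  ∀ m m' : ℤ → Fin k → F, IsMsgStream m → IsMsgStream m' →
    ∀ t : ℤ, 0 ≤ t →
      ∀ E : Finset ℤ, (∀ x ∈ E, t ≤ x ∧ x ≤ t + τ) → t ∈ E → E.card ≤ a →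
        (∀ t' < t, m t' = m' t') →
        (∀ t' : ℤ, t ≤ t' → t' ≤ t + τ → t' ∉ E →
          m t' = m' t' ∧ C.parity m t' = C.parity m' t') →
        m t = m' t

/-- `(a, τ, r)` locally recoverable streaming code. -/
def IsLRSC {F : Type} [Zero F] {k n : ℕ} (C : PacketCode F k n) (a τ r : ℕ) : Prop :=
  IsSC C a τ ∧ IsSC C 1 r
/-- Every square submatrix of `M` is nonsingular. -/
def AllSquareSubmatricesNonsingular {K : Type} [Field K] {r a : ℕ}
    (M : Matrix (Fin r) (Fin a) K) : Prop :=
  ∀ (z : ℕ) (ρ : Fin z → Fin r) (σ : Fin z → Fin a),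
    Function.Injective ρ → Function.Injective σ → (M.submatrix ρ σ).det ≠ 0

/-- `Γ = C ⬝ diag(α₀,…,α_{a-1})`, i.e. the `j`-th column of `C` scaled by `α j`. -/
def gammaMatrix {K : Type} [Field K] {r a : ℕ} (C : Matrix (Fin r) (Fin a) K)
    (α : Fin a → K) : Matrix (Fin r) (Fin a) K :=
  Matrix.of fun i j => C i j * α j
/-- Construction 1: the packet-level code with `k = r`, `n = r+1` and parity
`p₀(t) = Σ_{j=0}^{a-1} \hat m(t - r - j(r+1)) · Γ_j`, where
`\hat m(s) = (m_0(s), m_1(s+1), …, m_{r-1}(s+r-1))`. -/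
def construction1 {K : Type} [Field K] {r a : ℕ} (Γ : Matrix (Fin r) (Fin a) K) :
    PacketCode K r (r + 1) where
  parity := fun m t _ => ∑ j : Fin a, ∑ i : Fin r,
    Γ i j * m (t - (r : ℤ) - ((j : ℕ) : ℤ) * ((r : ℤ) + 1) + ((i : ℕ) : ℤ)) i
  causal := by
    intro m m' t h
    funext s
    refine Finset.sum_congr rfl fun j _ => Finset.sum_congr rfl fun i _ => ?_
    have h1 : (0 : ℤ) ≤ ((j : ℕ) : ℤ) * ((r : ℤ) + 1) := by positivity
    have h2 : ((i : ℕ) : ℤ) < (r : ℤ) := by exact_mod_cast i.isLt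
    rw [h (t - (r : ℤ) - ((j : ℕ) : ℤ) * ((r : ℤ) + 1) + ((i : ℕ) : ℤ)) (by linarith)]

/-!
The parity symbol `p₀(t + r - i)` is one linear equation in which `m_i(t)` occurs with
coefficient `Γ_{i,0} = C_{i,0} α₀ = C_{i,0}`, nonzero because it is a `1 × 1` minor of `C`.
Every other message symbol in that equation lies either before `t` (known) or in one of
the unerased packets `c(t+1), …, c(t+r)`, so the equation determines `m_i(t)`.
-/

open Finset

lemma eq_of_sum_mul_eq_sum_mul {K ι : Type*} [Field K] [Fintype ι]
    {c f g : ι → K} {x₀ : ι} (hc : c x₀ ≠ 0) (hfg : ∀ x ≠ x₀, f x = g x)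
    (hsum : ∑ x, c x * f x = ∑ x, c x * g x) : f x₀ = g x₀ := by
  have hdiff : ∑ x, c x * (f x - g x) = c x₀ * (f x₀ - g x₀) :=
    sum_eq_single x₀ (fun x _ hx => by rw [hfg x hx, sub_self, mul_zero])
      (fun h => absurd (mem_univ x₀) h)
  have hzero : c x₀ * (f x₀ - g x₀) = 0 := by
    rw [← hdiff]
    simp only [mul_sub, sum_sub_distrib, hsum, sub_self]
  exact sub_eq_zero.mp ((mul_eq_zero.mp hzero).resolve_left hc)

lemma AllSquareSubmatricesNonsingular.apply_ne_zero {K : Type} [Field K] {r a : ℕ}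
    {M : Matrix (Fin r) (Fin a) K} (hM : AllSquareSubmatricesNonsingular M) (i : Fin r)
    (j : Fin a) : M i j ≠ 0 := by
  simpa using hM 1 (fun _ => i) (fun _ => j)
    (Function.injective_of_subsingleton _) (Function.injective_of_subsingleton _)

section Construction1

variable {K : Type} [Field K] {r a : ℕ}

lemma construction1_parity_apply (Γ : Matrix (Fin r) (Fin a) K) (m : ℤ → Fin r → K)
    (t : ℤ) (u : Fin (r + 1 - r)) :
    (construction1 Γ).parity m t u = ∑ p : Fin a × Fin r,
      Γ p.2 p.1 * m (t - r - (p.1 : ℕ) * (r + 1) + (p.2 : ℕ)) p.2 :=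
  (Fintype.sum_prod_type' fun j i => Γ i j * m (t - r - (j : ℕ) * (r + 1) + (i : ℕ)) i).symm

/-- Term `(j, i')` of the parity at time `t + r - i` reads `m_{i'}` at the time displayed;
for `(j, i') = (0, i)` that time is `t`. -/
lemma construction1_tap_time_lt_or_mem [NeZero a] (t : ℤ) (i : Fin r) (p : Fin a × Fin r)
    (hp : p ≠ (0, i)) :
    t + r - (i : ℕ) - r - (p.1 : ℕ) * (r + 1) + (p.2 : ℕ) < t ∨
      (t + 1 ≤ t + r - (i : ℕ) - r - (p.1 : ℕ) * (r + 1) + (p.2 : ℕ) ∧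
        t + r - (i : ℕ) - r - (p.1 : ℕ) * (r + 1) + (p.2 : ℕ) ≤ t + r) := by
  obtain ⟨j, i'⟩ := p
  dsimp only
  have hi := i.isLt
  have hi' := i'.isLt
  rcases eq_or_ne j 0 with rfl | hj
  · have hii' : (i' : ℕ) ≠ i := fun h => hp (by simp [Fin.ext h])
    simp only [Fin.val_zero, Nat.cast_zero, zero_mul]
    omega
  · have hj1 : (r : ℤ) + 1 ≤ (j : ℕ) * (r + 1) := by
      have : 1 ≤ (j : ℕ) := Nat.one_le_iff_ne_zero.mpr (Fin.val_ne_of_ne hj)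
      nlinarith
    omega

theorem construction1_decode [NeZero a] {Γ : Matrix (Fin r) (Fin a) K} (i : Fin r)
    (hΓ : Γ i 0 ≠ 0) {m m' : ℤ → Fin r → K} {t : ℤ} (hpast : ∀ t' < t, m t' = m' t')
    (hfut : ∀ t' : ℤ, t + 1 ≤ t' → t' ≤ t + r → m t' = m' t')
    (hpar : (construction1 Γ).parity m (t + r - (i : ℕ)) =
      (construction1 Γ).parity m' (t + r - (i : ℕ))) :
    m t i = m' t i := by
  have hsum := congrFun hpar ⟨0, by omega⟩
  rw [construction1_parity_apply, construction1_parity_apply] at hsum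
  have key := eq_of_sum_mul_eq_sum_mul (x₀ := ((0 : Fin a), i)) hΓ (fun p hp => ?_) hsum
  · have htap : t + r - (i : ℕ) - r - ((0 : Fin a) : ℕ) * (r + 1) + (i : ℕ) = t := by
      simp only [Fin.val_zero, Nat.cast_zero, zero_mul, sub_zero]
      ring
    rwa [htap] at key
  · rcases construction1_tap_time_lt_or_mem t i p hp with h | ⟨h₁, h₂⟩
    · rw [hpast _ h]
    · rw [hfut _ h₁ h₂]

theorem construction1_isSC_one [NeZero a] {Γ : Matrix (Fin r) (Fin a) K}
    (hΓ : ∀ i, Γ i 0 ≠ 0) : IsSC (construction1 Γ) 1 r := by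
  intro m m' _ _ t _ E _ htE hcard hpast hunerased
  have hEt : ∀ x ∈ E, x = t := fun x hx => card_le_one.mp hcard x hx t htE
  have hnotE : ∀ t', t + 1 ≤ t' → t' ∉ E := fun t' h ht' => by linarith [hEt t' ht']
  funext i
  have hi := i.isLt
  exact construction1_decode i (hΓ i) hpast
    (fun t' h₁ h₂ => (hunerased t' (by linarith) h₂ (hnotE t' h₁)).1)
    (hunerased _ (by omega) (by omega) (hnotE _ (by omega))).2

end Construction1

theorem construction1_is_one_r_SC
    (K : Type) [Field K] (a r : ℕ)
    (ha : 2 ≤ a)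
    (C : Matrix (Fin r) (Fin a) K)
    (hCns : AllSquareSubmatricesNonsingular C)
    (α : Fin a → K)
    (hα01 : ∀ j : Fin a, (j : ℕ) ≤ 1 → α j = 1)
    :
    (∀ m m' : ℤ → Fin r → K, IsMsgStream m → IsMsgStream m' →
      ∀ t : ℤ, 0 ≤ t →
        (∀ t' < t, m t' = m' t') →
        (∀ t' : ℤ, t + 1 ≤ t' → t' ≤ t + r →
          m t' = m' t' ∧
          (construction1 (gammaMatrix C α)).parity m t' =
            (construction1 (gammaMatrix C α)).parity m' t') →
        ∀ i : Fin r,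
          (construction1 (gammaMatrix C α)).parity m (t + (r : ℤ) - ((i : ℕ) : ℤ)) =
            (construction1 (gammaMatrix C α)).parity m' (t + (r : ℤ) - ((i : ℕ) : ℤ)) →
          m t i = m' t i) ∧
    IsSC (construction1 (gammaMatrix C α)) 1 r := by
  have : NeZero a := ⟨by omega⟩
  have hΓ : ∀ i, gammaMatrix C α i 0 ≠ 0 := fun i => by
    simpa [gammaMatrix, hα01 0 (by simp)] using hCns.apply_ne_zero i 0
  exact ⟨fun m m' _ _ t _ hpast hunerased i =>
      construction1_decode i (hΓ i) hpast (fun t' h₁ h₂ => (hunerased t' h₁ h₂).1),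
    construction1_isSC_one hΓ⟩
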